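/- Let K be an algebraically closed field of characteristic zero, and consider Y = V(T_0^{l_0} − T_1^{l_1} − T_2^{l_2}) where T_0^{l_0} = T_{01}^2 T_{02}^{2m_{02}}···T_{0n_0}^{2m_{0n_0}} and T_1^{l_1} = T_{11}^2 T_{12}^{2m_{12}}···T_{1n_1}^{2m_{1n_1}} (all exponents even, with the first exponent in each equal to 2). Writing √(T_k^{l_k}) = T_{k1} T_{k2}^{m_{k2}}···T_{kn_k}^{m_{kn_k}} for k = 0,1, the derivation δ of K[Y] defined by δ(T_{01}) = (∂T_2^{l_2}/∂T_{21})·√(T_1^{l_1})/T_{11}, δ(T_{11}) = (∂T_2^{l_2}/∂T_{21})·√(T_0^{l_0})/T_{01}, δ(T_{21}) = 2·(√(T_0^{l_0})/T_{01})·(√(T_1^{l_1})/T_{11})·(√(T_0^{l_0}) − √(T_1^{l_1})), and δ(T_{ij}) = 0 for j ≠ 1, satisfies δ(T_0^{l_0} − T_1^{l_1} − T_2^{l_2}) = 0 and δ(√(T_0^{l_0}) − √(T_1^{l_1})) = 0, and is locally nilpotent; hence Y is not rigid. -/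
import Mathlib

set_option synthInstance.maxHeartbeats 1000000
set_option maxHeartbeats 1000000

/-- A derivation is locally nilpotent if every element is annihilated by some power. -/
def IsLND {K A : Type*} [CommSemiring K] [CommRing A] [Algebra K A]
    (D : Derivation K A A) : Prop :=
  ∀ a : A, ∃ n : ℕ, (⇑D)^[n] a = 0

open MvPolynomial

/-- Index set of the variables `T_{0j}, T_{1j}, T_{2j}`. -/
abbrev TriIdx9 (n0 n1 n2 : ℕ) : Type :=
  Fin (n0 + 1) ⊕ (Fin (n1 + 1) ⊕ Fin (n2 + 1))

section AuxLND
variable {K A : Type*} [CommRing K] [CommRing A] [Algebra K A] (D : Derivation K A A)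

lemma myIterAdd (n : ℕ) (a b : A) : (⇑D)^[n] (a + b) = (⇑D)^[n] a + (⇑D)^[n] b := by
  induction n generalizing a b with
  | zero => simp
  | succ n ih => simp only [Function.iterate_succ_apply, map_add, ih]

lemma myIterZero (n : ℕ) : (⇑D)^[n] (0 : A) = 0 := by
  induction n with
  | zero => rfl
  | succ n ih => simp only [Function.iterate_succ_apply, map_zero, ih]

lemma myIterStable {k n : ℕ} {a : A} (h : k ≤ n) (ha : (⇑D)^[k] a = 0) :
    (⇑D)^[n] a = 0 := by
  have : n = (n - k) + k := by omega
  rw [this, Function.iterate_add_apply, ha, myIterZero]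

lemma myLndMul : ∀ (k m n : ℕ) (a b : A), m + n = k → (⇑D)^[m] a = 0 → (⇑D)^[n] b = 0 →
    (⇑D)^[k] (a * b) = 0 := by
  intro k
  induction k with
  | zero =>
    intro m n a b hk ha hb
    have hm : m = 0 := by omega
    subst hm
    simp only [Function.iterate_zero, id_eq] at ha ⊢
    rw [ha, zero_mul]
  | succ k ih =>
    intro m n a b hk ha hb
    rcases Nat.eq_zero_or_pos m with hm | hm
    · subst hm
      simp only [Function.iterate_zero, id_eq] at ha
      rw [ha, zero_mul]; exact myIterZero D _
    rcases Nat.eq_zero_or_pos n with hn | hn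
    · subst hn
      simp only [Function.iterate_zero, id_eq] at hb
      rw [hb, mul_zero]; exact myIterZero D _
    have ha' : (⇑D)^[m - 1] (D a) = 0 := by
      rw [← Function.iterate_succ_apply]
      exact myIterStable D (by omega) ha
    have hb' : (⇑D)^[n - 1] (D b) = 0 := by
      rw [← Function.iterate_succ_apply]
      exact myIterStable D (by omega) hb
    rw [Function.iterate_succ_apply, Derivation.leibniz, smul_eq_mul, smul_eq_mul, myIterAdd,
      ih m (n - 1) a (D b) (by omega) ha hb',
      ih n (m - 1) b (D a) (by omega) hb ha', add_zero]

lemma myLndMul' {a b : A} (ha : ∃ m, (⇑D)^[m] a = 0) (hb : ∃ n, (⇑D)^[n] b = 0) :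
    ∃ k, (⇑D)^[k] (a * b) = 0 := by
  obtain ⟨m, hm⟩ := ha; obtain ⟨n, hn⟩ := hb
  exact ⟨m + n, myLndMul D (m + n) m n a b rfl hm hn⟩

lemma myLndOfKer {a : A} (ha : D a = 0) : ∃ n, (⇑D)^[n] a = 0 := ⟨1, ha⟩

lemma myLndPow {a : A} (ha : ∃ m, (⇑D)^[m] a = 0) (n : ℕ) :
    ∃ k, (⇑D)^[k] (a ^ n) = 0 := by
  induction n with
  | zero => exact ⟨1, by simp⟩
  | succ n ih => rw [pow_succ]; exact myLndMul' D ih ha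

lemma myKerPow {a : A} (ha : D a = 0) (n : ℕ) : D (a ^ n) = 0 := by
  rw [Derivation.leibniz_pow, ha, smul_zero, smul_zero]

lemma myKerMul {a b : A} (ha : D a = 0) (hb : D b = 0) : D (a * b) = 0 := by
  rw [Derivation.leibniz, ha, hb, smul_zero, smul_zero, add_zero]

lemma myKerProd {ι : Type*} (s : Finset ι) (f : ι → A) (h : ∀ i ∈ s, D (f i) = 0) :
    D (∏ i ∈ s, f i) = 0 := by
  classical
  induction s using Finset.induction with
  | empty => simp
  | @insert a s hi ih =>
    rw [Finset.prod_insert hi]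
    exact myKerMul D (h a (Finset.mem_insert_self a s))
      (ih fun i hi' => h i (Finset.mem_insert_of_mem hi'))

/-- derivative of `X z ^ e * q` when `D q = 0`. -/
lemma myDerivSingle {σ K : Type*} [CommRing K]
    (D : Derivation K (MvPolynomial σ K) (MvPolynomial σ K)) (z : σ) (e : ℕ)
    (q : MvPolynomial σ K) (hq : D q = 0) :
    D (X z ^ e * q) = (e : MvPolynomial σ K) * X z ^ (e - 1) * q * D (X z) := by
  rw [Derivation.leibniz, hq, smul_zero, zero_add, Derivation.leibniz_pow]
  simp only [smul_eq_mul, nsmul_eq_mul]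
  ring

end AuxLND

theorem stmt9 {K : Type*} [Field K] [IsAlgClosed K] [CharZero K]
    (n0 n1 n2 : ℕ)
    (m0 : Fin (n0 + 1) → ℕ) (m1 : Fin (n1 + 1) → ℕ) (l2 : Fin (n2 + 1) → ℕ)
    (hm0 : ∀ j, 0 < m0 j) (hm1 : ∀ j, 0 < m1 j) (hl2 : ∀ j, 0 < l2 j)
    (h0 : m0 0 = 1) (h1 : m1 0 = 1)
    -- the monomials, their square roots, and the square roots divided by the first variable
    (T0 T1 T2 s0 s1 r0 r1 : MvPolynomial (TriIdx9 n0 n1 n2) K)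
    (hT0 : T0 = ∏ j, X (Sum.inl j) ^ (2 * m0 j))
    (hT1 : T1 = ∏ j, X (Sum.inr (Sum.inl j)) ^ (2 * m1 j))
    (hT2 : T2 = ∏ j, X (Sum.inr (Sum.inr j)) ^ l2 j)
    (hs0 : s0 = ∏ j, X (Sum.inl j) ^ m0 j)
    (hs1 : s1 = ∏ j, X (Sum.inr (Sum.inl j)) ^ m1 j)
    (hr0 : r0 = ∏ j ∈ Finset.univ.erase (0 : Fin (n0 + 1)), X (Sum.inl j) ^ m0 j)
    (hr1 : r1 = ∏ j ∈ Finset.univ.erase (0 : Fin (n1 + 1)), X (Sum.inr (Sum.inl j)) ^ m1 j)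
    (I : Ideal (MvPolynomial (TriIdx9 n0 n1 n2) K))
    (hI : I = Ideal.span {T0 - T1 - T2}) :
    ∃ δ : Derivation K (MvPolynomial (TriIdx9 n0 n1 n2) K ⧸ I)
        (MvPolynomial (TriIdx9 n0 n1 n2) K ⧸ I),
      δ ≠ 0 ∧ IsLND δ ∧
      δ (Ideal.Quotient.mk I (X (Sum.inl 0))) =
        Ideal.Quotient.mk I (pderiv (Sum.inr (Sum.inr 0)) T2 * r1) ∧
      δ (Ideal.Quotient.mk I (X (Sum.inr (Sum.inl 0)))) =
        Ideal.Quotient.mk I (pderiv (Sum.inr (Sum.inr 0)) T2 * r0) ∧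
      δ (Ideal.Quotient.mk I (X (Sum.inr (Sum.inr 0)))) =
        Ideal.Quotient.mk I (2 * r0 * r1 * (s0 - s1)) ∧
      (∀ j : Fin (n0 + 1), j ≠ 0 → δ (Ideal.Quotient.mk I (X (Sum.inl j))) = 0) ∧
      (∀ j : Fin (n1 + 1), j ≠ 0 →
        δ (Ideal.Quotient.mk I (X (Sum.inr (Sum.inl j)))) = 0) ∧
      (∀ j : Fin (n2 + 1), j ≠ 0 →
        δ (Ideal.Quotient.mk I (X (Sum.inr (Sum.inr j)))) = 0) ∧
      δ (Ideal.Quotient.mk I (T0 - T1 - T2)) = 0 ∧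
      δ (Ideal.Quotient.mk I (s0 - s1)) = 0 := by
  classical
  set z : TriIdx9 n0 n1 n2 := Sum.inr (Sum.inr 0) with hz
  set v : TriIdx9 n0 n1 n2 → MvPolynomial (TriIdx9 n0 n1 n2) K :=
    Sum.elim (fun j => if j = 0 then pderiv z T2 * r1 else 0)
      (Sum.elim (fun j => if j = 0 then pderiv z T2 * r0 else 0)
        (fun j => if j = 0 then 2 * r0 * r1 * (s0 - s1) else 0)) with hv
  set D0 : Derivation K (MvPolynomial (TriIdx9 n0 n1 n2) K)
      (MvPolynomial (TriIdx9 n0 n1 n2) K) := mkDerivation K v with hD0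
  -- values on variables
  have hd00 : D0 (X (Sum.inl (0 : Fin (n0 + 1)))) = pderiv z T2 * r1 := by
    rw [hD0, mkDerivation_X, hv]; simp
  have hd10 : D0 (X (Sum.inr (Sum.inl (0 : Fin (n1 + 1))))) = pderiv z T2 * r0 := by
    rw [hD0, mkDerivation_X, hv]; simp
  have hd20 : D0 (X z) = 2 * r0 * r1 * (s0 - s1) := by
    rw [hD0, mkDerivation_X, hv, hz]; simp
  have hd0j : ∀ j : Fin (n0 + 1), j ≠ 0 → D0 (X (Sum.inl j)) = 0 := by
    intro j hj; rw [hD0, mkDerivation_X, hv]; simp [hj]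
  have hd1j : ∀ j : Fin (n1 + 1), j ≠ 0 → D0 (X (Sum.inr (Sum.inl j))) = 0 := by
    intro j hj; rw [hD0, mkDerivation_X, hv]; simp [hj]
  have hd2j : ∀ j : Fin (n2 + 1), j ≠ 0 → D0 (X (Sum.inr (Sum.inr j))) = 0 := by
    intro j hj; rw [hD0, mkDerivation_X, hv]; simp [hj]
  -- kernel facts
  have hkr0 : D0 r0 = 0 := by
    rw [hr0]
    exact myKerProd D0 _ _ fun j hj =>
      myKerPow D0 (hd0j j (Finset.ne_of_mem_erase hj)) _
  have hkr1 : D0 r1 = 0 := by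
    rw [hr1]
    exact myKerProd D0 _ _ fun j hj =>
      myKerPow D0 (hd1j j (Finset.ne_of_mem_erase hj)) _
  set q2 : MvPolynomial (TriIdx9 n0 n1 n2) K :=
    ∏ j ∈ Finset.univ.erase (0 : Fin (n2 + 1)), X (Sum.inr (Sum.inr j)) ^ l2 j with hq2
  have hkq2 : D0 q2 = 0 := by
    rw [hq2]
    exact myKerProd D0 _ _ fun j hj =>
      myKerPow D0 (hd2j j (Finset.ne_of_mem_erase hj)) _
  -- factorizations
  have hT2f : T2 = X z ^ l2 0 * q2 := by
    rw [hT2, ← Finset.mul_prod_erase Finset.univ _ (Finset.mem_univ (0 : Fin (n2 + 1))), ← hq2, hz]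
  have hs0f : s0 = X (Sum.inl (0 : Fin (n0 + 1))) ^ m0 0 * r0 := by
    rw [hs0, ← Finset.mul_prod_erase Finset.univ _ (Finset.mem_univ (0 : Fin (n0 + 1))), ← hr0]
  have hs1f : s1 = X (Sum.inr (Sum.inl (0 : Fin (n1 + 1)))) ^ m1 0 * r1 := by
    rw [hs1, ← Finset.mul_prod_erase Finset.univ _ (Finset.mem_univ (0 : Fin (n1 + 1))), ← hr1]
  have hT0sq : T0 = s0 ^ 2 := by
    rw [hT0, hs0, ← Finset.prod_pow]
    exact Finset.prod_congr rfl fun j _ => by rw [← pow_mul, Nat.mul_comm]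
  have hT1sq : T1 = s1 ^ 2 := by
    rw [hT1, hs1, ← Finset.prod_pow]
    exact Finset.prod_congr rfl fun j _ => by rw [← pow_mul, Nat.mul_comm]
  -- pderiv of T2
  have hpdq2 : pderiv z q2 = 0 := by
    rw [hq2]
    refine myKerProd _ _ _ fun j hj => myKerPow _ ?_ _
    exact pderiv_X_of_ne fun h => Finset.ne_of_mem_erase hj (by
      rw [hz] at h; simpa using h)
  have hpdT2 : pderiv z T2 = (l2 0 : MvPolynomial (TriIdx9 n0 n1 n2) K)
      * X z ^ (l2 0 - 1) * q2 := by
    rw [hT2f, myDerivSingle _ _ _ _ hpdq2, pderiv_X_self, mul_one]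
  -- derivatives of the main quantities
  have hdT2 : D0 T2 = pderiv z T2 * (2 * r0 * r1 * (s0 - s1)) := by
    rw [hpdT2, hT2f, myDerivSingle _ _ _ _ hkq2, hd20]
  have hds0 : D0 s0 = r0 * (pderiv z T2 * r1) := by
    rw [hs0f, myDerivSingle _ _ _ _ hkr0, hd00, h0]
    norm_num
  have hds1 : D0 s1 = r1 * (pderiv z T2 * r0) := by
    rw [hs1f, myDerivSingle _ _ _ _ hkr1, hd10, h1]
    norm_num
  have hdT0 : D0 T0 = 2 * s0 * (r0 * (pderiv z T2 * r1)) := by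
    rw [hT0sq, Derivation.leibniz_pow, hds0]
    simp only [smul_eq_mul, nsmul_eq_mul, pow_one, Nat.cast_ofNat]
    ring
  have hdT1 : D0 T1 = 2 * s1 * (r1 * (pderiv z T2 * r0)) := by
    rw [hT1sq, Derivation.leibniz_pow, hds1]
    simp only [smul_eq_mul, nsmul_eq_mul, pow_one, Nat.cast_ofNat]
    ring
  have hdf : D0 (T0 - T1 - T2) = 0 := by
    rw [map_sub, map_sub, hdT0, hdT1, hdT2]
    ring
  have hdu : D0 (s0 - s1) = 0 := by
    rw [map_sub, hds0, hds1]
    ring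
  -- more kernel elements
  have hknat : ∀ n : ℕ, D0 ((n : MvPolynomial (TriIdx9 n0 n1 n2) K)) = 0 := fun n => by
    rw [← map_natCast (C : K →+* MvPolynomial (TriIdx9 n0 n1 n2) K) n, derivation_C]
  have hk2 : D0 (2 : MvPolynomial (TriIdx9 n0 n1 n2) K) = 0 := by
    have := hknat 2; simpa using this
  have hdg : D0 (2 * r0 * r1 * (s0 - s1)) = 0 :=
    myKerMul D0 (myKerMul D0 (myKerMul D0 hk2 hkr0) hkr1) hdu
  -- local nilpotency of D0
  have hXz : ∃ n, (⇑D0)^[n] (X z) = 0 := by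
    refine ⟨2, ?_⟩
    have h2 : (⇑D0)^[2] (X z) = D0 (D0 (X z)) := rfl
    rw [h2, hd20, hdg]
  have hlndpd : ∃ n, (⇑D0)^[n] (pderiv z T2) = 0 := by
    rw [hpdT2]
    exact myLndMul' D0 (myLndMul' D0 (myLndOfKer D0 (hknat _)) (myLndPow D0 hXz _))
      (myLndOfKer D0 hkq2)
  have hvar : ∀ i : TriIdx9 n0 n1 n2, ∃ n, (⇑D0)^[n] (X i) = 0 := by
    rintro (j | j | j)
    · by_cases hj : j = 0
      · subst hj
        obtain ⟨n, hn⟩ := myLndMul' D0 hlndpd (myLndOfKer D0 hkr1)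
        exact ⟨n + 1, by rw [Function.iterate_succ_apply, hd00]; exact hn⟩
      · exact ⟨1, hd0j j hj⟩
    · by_cases hj : j = 0
      · subst hj
        obtain ⟨n, hn⟩ := myLndMul' D0 hlndpd (myLndOfKer D0 hkr0)
        exact ⟨n + 1, by rw [Function.iterate_succ_apply, hd10]; exact hn⟩
      · exact ⟨1, hd1j j hj⟩
    · by_cases hj : j = 0
      · subst hj; exact hXz
      · exact ⟨1, hd2j j hj⟩
  have lnd_all : ∀ p : MvPolynomial (TriIdx9 n0 n1 n2) K, ∃ n, (⇑D0)^[n] p = 0 := by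
    intro p
    induction p using MvPolynomial.induction_on with
    | C a => exact myLndOfKer D0 (derivation_C D0 a)
    | add p q hp hq =>
      obtain ⟨m, hm⟩ := hp; obtain ⟨n, hn⟩ := hq
      exact ⟨max m n, by
        rw [myIterAdd, myIterStable D0 (le_max_left m n) hm,
          myIterStable D0 (le_max_right m n) hn, add_zero]⟩
    | mul_X p i hp => exact myLndMul' D0 hp (hvar i)
  -- D0 preserves I
  have hII : ∀ x ∈ I, D0 x ∈ I := by
    intro x hx
    rw [hI, Ideal.mem_span_singleton] at hx ⊢
    obtain ⟨c, rfl⟩ := hx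
    rw [Derivation.leibniz, smul_eq_mul, smul_eq_mul, hdf, mul_zero, add_zero]
    exact Dvd.intro _ rfl
  -- induced derivation on the quotient
  set F : MvPolynomial (TriIdx9 n0 n1 n2) K →ₗ[K] (MvPolynomial (TriIdx9 n0 n1 n2) K ⧸ I) :=
    (Ideal.Quotient.mkₐ K I).toLinearMap ∘ₗ D0.toLinearMap with hF
  have hFker : I.restrictScalars K ≤ LinearMap.ker F := by
    intro x hx
    have hx' : D0 x ∈ I := hII x hx
    simp only [hF, LinearMap.mem_ker, LinearMap.coe_comp, Function.comp_apply,
      AlgHom.toLinearMap_apply, Ideal.Quotient.mkₐ_eq_mk, Derivation.coeFn_coe]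
    exact (Ideal.Quotient.eq_zero_iff_mem).2 hx'
  set Dlin : (MvPolynomial (TriIdx9 n0 n1 n2) K ⧸ I) →ₗ[K]
      (MvPolynomial (TriIdx9 n0 n1 n2) K ⧸ I) :=
    (Submodule.liftQ (I.restrictScalars K) F hFker) ∘ₗ
      (Submodule.Quotient.restrictScalarsEquiv K I).symm.toLinearMap with hDlin
  have key0 : ∀ a : MvPolynomial (TriIdx9 n0 n1 n2) K,
      Dlin (Ideal.Quotient.mk I a) = Ideal.Quotient.mk I (D0 a) := by
    intro a
    show (Submodule.liftQ (I.restrictScalars K) F hFker)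
        ((Submodule.Quotient.restrictScalarsEquiv K I).symm (Submodule.Quotient.mk a)) = _
    rw [Submodule.Quotient.restrictScalarsEquiv_symm_mk, Submodule.liftQ_apply]
    rfl
  set δ : Derivation K (MvPolynomial (TriIdx9 n0 n1 n2) K ⧸ I)
      (MvPolynomial (TriIdx9 n0 n1 n2) K ⧸ I) :=
    { toLinearMap := Dlin
      map_one_eq_zero' := by
        show Dlin 1 = 0
        rw [show (1 : MvPolynomial (TriIdx9 n0 n1 n2) K ⧸ I) = Ideal.Quotient.mk I 1 from
          (map_one _).symm, key0, D0.map_one_eq_zero, map_zero]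
      leibniz' := by
        intro a b
        show Dlin (a * b) = a • Dlin b + b • Dlin a
        obtain ⟨x, rfl⟩ := Ideal.Quotient.mk_surjective a
        obtain ⟨y, rfl⟩ := Ideal.Quotient.mk_surjective b
        rw [smul_eq_mul, smul_eq_mul, ← map_mul, key0, key0, key0, Derivation.leibniz,
          smul_eq_mul, smul_eq_mul, map_add, map_mul, map_mul] } with hδ
  have key : ∀ a : MvPolynomial (TriIdx9 n0 n1 n2) K,
      δ (Ideal.Quotient.mk I a) = Ideal.Quotient.mk I (D0 a) := key0
  have keyIter : ∀ (n : ℕ) (a : MvPolynomial (TriIdx9 n0 n1 n2) K),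
      (⇑δ)^[n] (Ideal.Quotient.mk I a) = Ideal.Quotient.mk I ((⇑D0)^[n] a) := by
    intro n
    induction n with
    | zero => intro a; rfl
    | succ n ih =>
      intro a
      rw [Function.iterate_succ_apply, Function.iterate_succ_apply, key, ih]
  refine ⟨δ, ?_, ?_, ?_, ?_, ?_, ?_, ?_, ?_, ?_, ?_⟩
  · -- δ ≠ 0
    intro h
    have h3 := key (X z)
    rw [hd20, h] at h3
    have h2 : Ideal.Quotient.mk I (2 * r0 * r1 * (s0 - s1)) = 0 := by simpa using h3.symm
    have hmem : (2 * r0 * r1 * (s0 - s1)) ∈ I := (Ideal.Quotient.eq_zero_iff_mem).1 h2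
    rw [hI, Ideal.mem_span_singleton] at hmem
    obtain ⟨c, hc⟩ := hmem
    set pt : TriIdx9 n0 n1 n2 → K :=
      Sum.elim (fun _ => 1)
        (Sum.elim (fun j => if j = 0 then -1 else 1) (fun _ => 0)) with hpt
    have e0 : eval pt T0 = 1 := by
      rw [hT0, map_prod]
      exact Finset.prod_eq_one fun j _ => by simp [hpt]
    have e1 : eval pt T1 = 1 := by
      rw [hT1, map_prod]
      refine Finset.prod_eq_one fun j _ => ?_
      by_cases hj : j = 0
      · subst hj; simp [hpt, pow_mul]
      · simp [hpt, hj]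
    have e2 : eval pt T2 = 0 := by
      rw [hT2, map_prod]
      refine Finset.prod_eq_zero (Finset.mem_univ (0 : Fin (n2 + 1))) ?_
      rw [map_pow, eval_X]
      have hpt0 : pt z = 0 := by rw [hpt, hz]; simp
      rw [hz] at hpt0
      rw [hpt0]
      exact zero_pow (hl2 0).ne'
    have es0 : eval pt s0 = 1 := by
      rw [hs0, map_prod]
      exact Finset.prod_eq_one fun j _ => by simp [hpt]
    have es1 : eval pt s1 = -1 := by
      rw [hs1, map_prod,
        ← Finset.mul_prod_erase Finset.univ _ (Finset.mem_univ (0 : Fin (n1 + 1)))]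
      have hrest : ∀ j ∈ Finset.univ.erase (0 : Fin (n1 + 1)),
          eval pt (X (Sum.inr (Sum.inl j)) ^ m1 j) = 1 := fun j hj => by
        simp [hpt, Finset.ne_of_mem_erase hj]
      rw [Finset.prod_congr rfl hrest, Finset.prod_const_one, mul_one]
      simp [hpt, h1]
    have er0 : eval pt r0 = 1 := by
      rw [hr0, map_prod]
      exact Finset.prod_eq_one fun j _ => by simp [hpt]
    have er1 : eval pt r1 = 1 := by
      rw [hr1, map_prod]
      refine Finset.prod_eq_one fun j hj => by simp [hpt, Finset.ne_of_mem_erase hj]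
    have hev := congrArg (eval pt) hc
    simp only [map_mul, map_sub, map_ofNat, e0, e1, e2, es0, es1, er0, er1] at hev
    norm_num at hev
  · -- IsLND
    intro x
    obtain ⟨p, rfl⟩ := Ideal.Quotient.mk_surjective x
    obtain ⟨n, hn⟩ := lnd_all p
    exact ⟨n, by rw [keyIter, hn, map_zero]⟩
  · rw [key, hd00]
  · rw [key, hd10]
  · rw [key, hd20]
  · intro j hj; rw [key, hd0j j hj, map_zero]
  · intro j hj; rw [key, hd1j j hj, map_zero]
  · intro j hj; rw [key, hd2j j hj, map_zero]
  · rw [key, hdf, map_zero]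
  · rw [key, hdu, map_zero]
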